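/- Error-feedback bound for the m-iterates of ADOM+: let χ ≥ 1, γ > 0, ν > 0, let W be a gossip map with parameter χ, and let m^k, y_g^k, z_g^k ∈ E with m^{k+1} = γν^{-1}(y_g^k + z_g^k) + m^k − W(γν^{-1}(y_g^k + z_g^k) + m^k). Then ‖m^k‖_P² ≤ 8χ²γ²ν^{-2}‖y_g^k + z_g^k‖_P² + 4χ(1 − (4χ)^{-1})‖m^k‖_P² − 4χ‖m^{k+1}‖_P². -/

import Mathlib

/-! Since `W` kills the consensus part and maps into `L_c^⊥`, the update `m⁺ = h − W h` with
`h = c g + m` satisfies `P m⁺ = P h − W (P h)`, so the gossip contraction gives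
`χ‖m⁺‖_P² ≤ (χ − 1)‖h‖_P² ≤ (χ − 1)(|c|‖g‖_P + ‖m‖_P)²`. What remains is a quadratic inequality
in the two norms. -/

open scoped InnerProductSpace BigOperators

noncomputable section

/-- The product space `E = (ℝ^d)^n` with inner product `⟨x, y⟩ = ∑ᵢ ⟨xᵢ, yᵢ⟩`. -/
abbrev E (n d : ℕ) : Type := PiLp 2 (fun _ : Fin n => EuclideanSpace ℝ (Fin d))

/-- The orthogonal projection `P` onto `L_c^⊥ = {z : ∑ᵢ zᵢ = 0}`:
`(Px)ᵢ = xᵢ − (1/n) ∑ⱼ xⱼ`. -/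
def projP {n d : ℕ} (x : E n d) : E n d := WithLp.toLp 2 (fun i => x i - (n : ℝ)⁻¹ • ∑ j, x j)

/-- `W : E → E` is a gossip map with parameter `χ`: it is given by an `n × n` matrix acting
blockwise (i.e. `W = W̃ ⊗ I_d`), it vanishes on the consensus space `L_c`, its range lies in
`L_c^⊥`, and `‖Wv − v‖² ≤ (1 − χ⁻¹)‖v‖²` for all `v ∈ L_c^⊥`. -/
def IsGossip {n d : ℕ} (χ : ℝ) (W : E n d → E n d) : Prop :=
  (∃ Wt : Matrix (Fin n) (Fin n) ℝ, ∀ (v : E n d) (i : Fin n), W v i = ∑ j, Wt i j • v j) ∧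
  (∀ v : E n d, (∀ i j : Fin n, v i = v j) → W v = 0) ∧
  (∀ v : E n d, ∑ i, W v i = 0) ∧
  (∀ v : E n d, ∑ i, v i = 0 → ‖W v - v‖ ^ 2 ≤ (1 - χ⁻¹) * ‖v‖ ^ 2)

/-- Bregman divergence `D_F(x, y) = F(x) − F(y) − ⟨∇F(y), x − y⟩` (here `G = ∇F`). -/
def DF {n d : ℕ} (F : E n d → ℝ) (G : E n d → E n d) (x y : E n d) : ℝ :=
  F x - F y - ⟪G y, x - y⟫_ℝ

/-- Primal Lyapunov function
`Ψ_x = (1/η + α)‖x − x*‖² + (2/τ₂)(D_F(x_f, x*) − (ν/2)‖x_f − x*‖²)`. -/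
def PsiX {n d : ℕ} (F : E n d → ℝ) (G : E n d → E n d) (η α τ₂ ν : ℝ)
    (xs xk xfk : E n d) : ℝ :=
  (1 / η + α) * ‖xk - xs‖ ^ 2 + (2 / τ₂) * (DF F G xfk xs - (ν / 2) * ‖xfk - xs‖ ^ 2)

/-- Dual Lyapunov function `Ψ_yz` (with `ẑ = z − P m`):
`(1/θ + β/2)‖y − y*‖² + (β/(2σ₂))‖y_f − y*‖² + (1/γ)‖ẑ − z*‖² + (4/(3γ))‖m‖_P²
  + (1/(νσ₂))‖y_f + z_f − (y* + z*)‖²`. -/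
def PsiYZ {n d : ℕ} (θ β σ₂ γ ν : ℝ) (ys zs yk yfk zk zfk mk : E n d) : ℝ :=
  (1 / θ + β / 2) * ‖yk - ys‖ ^ 2 + (β / (2 * σ₂)) * ‖yfk - ys‖ ^ 2
    + (1 / γ) * ‖zk - projP mk - zs‖ ^ 2 + (4 / (3 * γ)) * ‖projP mk‖ ^ 2
    + (1 / (ν * σ₂)) * ‖yfk + zfk - (ys + zs)‖ ^ 2

section projP

variable {n d : ℕ}

lemma projP_add (x y : E n d) : projP (x + y) = projP x + projP y := by
  refine PiLp.ext fun i => ?_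
  simp only [projP, PiLp.add_apply, Finset.sum_add_distrib, smul_add]
  abel

lemma projP_sub (x y : E n d) : projP (x - y) = projP x - projP y := by
  refine PiLp.ext fun i => ?_
  simp only [projP, PiLp.sub_apply, Finset.sum_sub_distrib, smul_sub]
  abel

lemma projP_smul (c : ℝ) (x : E n d) : projP (c • x) = c • projP x := by
  refine PiLp.ext fun i => ?_
  simp [projP, Finset.smul_sum, smul_sub, smul_comm c]

lemma sum_projP_eq_zero (x : E n d) : ∑ i, projP x i = 0 := by
  rcases eq_or_ne n 0 with rfl | hn
  · simp
  have hn' : (n : ℝ) ≠ 0 := Nat.cast_ne_zero.2 hn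
  simp only [projP, Finset.sum_sub_distrib, Finset.sum_const, Finset.card_fin,
    ← Nat.cast_smul_eq_nsmul ℝ, smul_smul, mul_inv_cancel₀ hn', one_smul, sub_self]

lemma projP_eq_self_of_sum_eq_zero {x : E n d} (hx : ∑ i, x i = 0) : projP x = x := by
  refine PiLp.ext fun i => ?_
  simp [projP, hx]

lemma sub_projP_apply (x : E n d) (i j : Fin n) : (x - projP x) i = (x - projP x) j := by
  simp [projP]

end projP

namespace IsGossip

variable {n d : ℕ} {χ : ℝ} {W : E n d → E n d}

lemma map_add (hW : IsGossip χ W) (u v : E n d) : W (u + v) = W u + W v := by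
  obtain ⟨⟨Wt, hWt⟩, -⟩ := hW
  refine PiLp.ext fun i => ?_
  simp only [PiLp.add_apply, hWt, smul_add, Finset.sum_add_distrib]

lemma map_projP (hW : IsGossip χ W) (x : E n d) : W (projP x) = W x := by
  conv_rhs => rw [← add_sub_cancel (projP x) x]
  rw [hW.map_add, hW.2.1 _ (sub_projP_apply x), add_zero]

lemma projP_sub_map (hW : IsGossip χ W) (x : E n d) :
    projP (x - W x) = projP x - W (projP x) := by
  rw [projP_sub, projP_eq_self_of_sum_eq_zero (hW.2.2.1 x), hW.map_projP]

lemma norm_projP_sub_map_sq_le (hW : IsGossip χ W) (x : E n d) :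
    ‖projP (x - W x)‖ ^ 2 ≤ (1 - χ⁻¹) * ‖projP x‖ ^ 2 := by
  rw [hW.projP_sub_map, norm_sub_rev]
  exact hW.2.2.2 _ (sum_projP_eq_zero x)

end IsGossip

/-- The difference of the two sides is a quadratic form in `a, b` with discriminant `32 − 96χ < 0`. -/
lemma sq_le_feedback_bound_of_sq_le {χ a b M : ℝ} (hχ : 1 ≤ χ)
    (hM : M ^ 2 ≤ (1 - χ⁻¹) * (a + b) ^ 2) :
    b ^ 2 ≤ 8 * χ ^ 2 * a ^ 2 + 4 * χ * (1 - (4 * χ)⁻¹) * b ^ 2 - 4 * χ * M ^ 2 := by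
  have hχ0 : 0 < χ := one_pos.trans_le hχ
  have hχM : χ * M ^ 2 ≤ (χ - 1) * (a + b) ^ 2 := by
    calc χ * M ^ 2 ≤ χ * ((1 - χ⁻¹) * (a + b) ^ 2) := mul_le_mul_of_nonneg_left hM hχ0.le
      _ = (χ - 1) * (a + b) ^ 2 := by field_simp
  have hcoef : 4 * χ * (1 - (4 * χ)⁻¹) = 4 * χ - 1 := by field_simp
  rw [hcoef]
  nlinarith [sq_nonneg (2 * (χ - 1) * a - b), mul_nonneg (sub_nonneg.2 hχ) (sq_nonneg a)]

theorem adom_plus_error_feedback_general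
    {n d : ℕ}
    (χ γ ν : ℝ) (hχ : 1 ≤ χ)
    (W : E n d → E n d) (hW : IsGossip χ W)
    (mk mk1 ygk zgk : E n d)
    (hmup : mk1 = (γ * ν⁻¹) • (ygk + zgk) + mk - W ((γ * ν⁻¹) • (ygk + zgk) + mk)) :
    ‖projP mk‖ ^ 2 ≤
      8 * χ ^ 2 * γ ^ 2 * (ν ^ 2)⁻¹ * ‖projP (ygk + zgk)‖ ^ 2
        + 4 * χ * (1 - (4 * χ)⁻¹) * ‖projP mk‖ ^ 2
        - 4 * χ * ‖projP mk1‖ ^ 2 := by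
  set c := γ * ν⁻¹
  have hcontract := hW.norm_projP_sub_map_sq_le (c • (ygk + zgk) + mk)
  rw [← hmup, projP_add, projP_smul] at hcontract
  have htri : ‖c • projP (ygk + zgk) + projP mk‖ ≤ |c| * ‖projP (ygk + zgk)‖ + ‖projP mk‖ := by
    simpa only [norm_smul, Real.norm_eq_abs] using norm_add_le (c • projP (ygk + zgk)) (projP mk)
  have hM := hcontract.trans <| mul_le_mul_of_nonneg_left
    (pow_le_pow_left₀ (norm_nonneg _) htri 2) (sub_nonneg.2 (inv_le_one_of_one_le₀ hχ))
  have hsq : 8 * χ ^ 2 * γ ^ 2 * (ν ^ 2)⁻¹ * ‖projP (ygk + zgk)‖ ^ 2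
      = 8 * χ ^ 2 * (|c| * ‖projP (ygk + zgk)‖) ^ 2 := by
    rw [mul_pow, sq_abs]; ring
  rw [hsq]
  exact sq_le_feedback_bound_of_sq_le hχ hM

/-- **Error-feedback bound for the m-iterates of ADOM+.**
Let `χ ≥ 1`, `γ > 0`, `ν > 0`, `W` a gossip map with parameter `χ`, and
`m^{k+1} = γν⁻¹(y_g^k + z_g^k) + m^k − W(γν⁻¹(y_g^k + z_g^k) + m^k)`. Then
`‖m^k‖_P² ≤ 8χ²γ²ν⁻²‖y_g^k + z_g^k‖_P² + 4χ(1 − (4χ)⁻¹)‖m^k‖_P² − 4χ‖m^{k+1}‖_P²`. -/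
theorem adom_plus_error_feedback
    {n d : ℕ} (hn : 1 ≤ n) (hd : 1 ≤ d)
    (χ γ ν : ℝ) (hχ : 1 ≤ χ) (hγ : 0 < γ) (hν : 0 < ν)
    (W : E n d → E n d) (hW : IsGossip χ W)
    (mk mk1 ygk zgk : E n d)
    (hmup : mk1 = (γ * ν⁻¹) • (ygk + zgk) + mk - W ((γ * ν⁻¹) • (ygk + zgk) + mk)) :
    ‖projP mk‖ ^ 2 ≤
      8 * χ ^ 2 * γ ^ 2 * (ν ^ 2)⁻¹ * ‖projP (ygk + zgk)‖ ^ 2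
        + 4 * χ * (1 - (4 * χ)⁻¹) * ‖projP mk‖ ^ 2
        - 4 * χ * ‖projP mk1‖ ^ 2 :=
  adom_plus_error_feedback_general χ γ ν hχ W hW mk mk1 ygk zgk hmup
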